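/- arXiv:2410.20224 — 5 statements merged into one kernel-verified Lean document; each statement's English description precedes it below -/
import Mathlib

section
/- Let Γ be a set of configurations, each of whose sets is nonempty, and let E be exactly the set of multisets of cardinality δ over Σ that arise as choices from members of Γ (i.e., a multiset M belongs to E if and only if there exists C ∈ Γ with Multiset.Rel (· ∈ ·) M C). Let K be the smallest set of configurations that contains Γ and contains every combination of two of its members all of whose sets are nonempty. Then the set of members of K that are not strictly dominated by any member of K is equal to the set of configurations, all of whose sets are nonempty, that satisfy the universal quantifier w.r.t. E and are not strictly dominated by any configuration, all of whose sets are nonempty, satisfying the universal quantifier w.r.t. E. (Correctness of the new round elimination procedure: the procedure produces exactly the maximal configurations satisfying the universal quantifier.) -/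
namespace RoundElim

/-- The configuration (multiset of cardinality `δ`) associated to a function `Fin δ → α`. -/
def ofFn {α : Type*} {δ : ℕ} (f : Fin δ → α) : Multiset α :=
  (List.ofFn f : List α)

variable {σ : Type*} [DecidableEq σ]

/-- `DominatedBy A B` means: configuration `B` dominates configuration `A`. -/
def DominatedBy (A B : Multiset (Finset σ)) : Prop :=
  Multiset.Rel (· ⊆ ·) A B

/-- `StrictlyDominatedBy A B` means: configuration `B` strictly dominates configuration `A`. -/
def StrictlyDominatedBy (A B : Multiset (Finset σ)) : Prop :=
  DominatedBy A B ∧ ¬ DominatedBy B A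

/-- The combination of the representatives `a`, `b` with respect to the permutation `φ`
and the index `u`: union at position `u`, intersection everywhere else. -/
def combineFn {δ : ℕ} (a b : Fin δ → Finset σ) (φ : Equiv.Perm (Fin δ)) (u : Fin δ) :
    Fin δ → Finset σ :=
  fun i => if i = u then a i ∪ b (φ i) else a i ∩ b (φ i)

/-- `C` is a combination of the configurations `A` and `B`. -/
def IsCombination (δ : ℕ) (C A B : Multiset (Finset σ)) : Prop :=
  ∃ (a b : Fin δ → Finset σ) (φ : Equiv.Perm (Fin δ)) (u : Fin δ),
    ofFn a = A ∧ ofFn b = B ∧ ofFn (combineFn a b φ u) = C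

/-- `C` satisfies the universal quantifier w.r.t. the edge constraint `E`. -/
def SatUQ (E : Set (Multiset σ)) (C : Multiset (Finset σ)) : Prop :=
  ∀ M : Multiset σ, Multiset.Rel (· ∈ ·) M C → M ∈ E

/-- A singleton configuration: all its sets have exactly one element. -/
def IsSingletonConfig (C : Multiset (Finset σ)) : Prop :=
  ∀ s ∈ C, s.card = 1

/-- The combination-closure of a set `Γ` of configurations: the smallest set containing `Γ`
and containing every combination of two of its members. -/
inductive CombClosure (δ : ℕ) (Γ : Set (Multiset (Finset σ))) :
    Multiset (Finset σ) → Prop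
  | base {C : Multiset (Finset σ)} : C ∈ Γ → CombClosure δ Γ C
  | comb {A B C : Multiset (Finset σ)} : CombClosure δ Γ A → CombClosure δ Γ B →
      IsCombination δ C A B → CombClosure δ Γ C


/-- The closure `K`: the smallest set of configurations containing `Γ` and containing every
combination of two of its members all of whose sets are nonempty. -/
inductive KClosure (δ : ℕ) (Γ : Set (Multiset (Finset σ))) :
    Multiset (Finset σ) → Prop
  | base {C : Multiset (Finset σ)} : C ∈ Γ → KClosure δ Γ C
  | comb {A B C : Multiset (Finset σ)} : KClosure δ Γ A → KClosure δ Γ B →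
      IsCombination δ C A B → (∀ s ∈ C, s.Nonempty) → KClosure δ Γ C

-- === auxiliary lemmas ===
section Aux
variable {α β : Type*}

@[simp] lemma ofFn_card {δ : ℕ} (f : Fin δ → α) : Multiset.card (ofFn f) = δ := by
  simp [ofFn]

lemma mem_ofFn' {δ : ℕ} (f : Fin δ → α) (s : α) : s ∈ ofFn f ↔ ∃ i, f i = s := by
  simp [ofFn, List.mem_ofFn, Set.range]

lemma ofFn_zero (f : Fin 0 → α) : ofFn f = 0 := by simp [ofFn]

lemma ofFn_succ {δ : ℕ} (f : Fin (δ + 1) → α) :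
    ofFn f = f 0 ::ₘ ofFn (fun i => f i.succ) := by
  simp [ofFn, List.ofFn_succ]

lemma exists_ofFn_eq {δ : ℕ} {C : Multiset α} (h : Multiset.card C = δ) :
    ∃ f : Fin δ → α, ofFn f = C := by
  obtain ⟨l, rfl⟩ := Quotient.exists_rep C
  have hl : l.length = δ := by simpa using h
  subst hl
  exact ⟨l.get, by simp [ofFn, List.ofFn_get]⟩

lemma rel_ofFn_right {δ : ℕ} {r : α → β → Prop} :
    ∀ {M : Multiset α} {g : Fin δ → β}, Multiset.Rel r M (ofFn g) →
      ∃ f : Fin δ → α, ofFn f = M ∧ ∀ i, r (f i) (g i) := by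
  induction δ with
  | zero =>
    intro M g h
    rw [ofFn_zero, Multiset.rel_zero_right] at h
    exact ⟨Fin.elim0, by simp [ofFn_zero, h], fun i => i.elim0⟩
  | succ n ih =>
    intro M g h
    rw [ofFn_succ] at h
    obtain ⟨a, M', hr, hM', rfl⟩ := Multiset.rel_cons_right.mp h
    obtain ⟨f', hf', hpt⟩ := ih hM'
    refine ⟨Fin.cons a f', ?_, ?_⟩
    · rw [ofFn_succ]
      simp [hf']
    · intro i
      refine Fin.cases ?_ ?_ i
      · simpa using hr
      · intro j; simpa using hpt j

lemma rel_ofFn_left {δ : ℕ} {r : α → β → Prop} {f : Fin δ → α} {C : Multiset β}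
    (h : Multiset.Rel r (ofFn f) C) :
    ∃ g : Fin δ → β, ofFn g = C ∧ ∀ i, r (f i) (g i) := by
  rw [← Multiset.rel_flip] at h
  exact rel_ofFn_right h

lemma rel_ofFn_of_pointwise {δ : ℕ} {r : α → β → Prop} {f : Fin δ → α} {g : Fin δ → β}
    (h : ∀ i, r (f i) (g i)) : Multiset.Rel r (ofFn f) (ofFn g) := by
  induction δ with
  | zero => rw [ofFn_zero, ofFn_zero]; exact Multiset.Rel.zero
  | succ n ih =>
    rw [ofFn_succ f, ofFn_succ g]
    exact Multiset.Rel.cons (h 0) (ih fun j => h j.succ)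

lemma ofFn_eq_map_univ {δ : ℕ} (f : Fin δ → α) :
    ofFn f = Multiset.map f Finset.univ.val := by
  rw [Fin.univ_val_map]; rfl

lemma ofFn_comp_perm {δ : ℕ} (g : Fin δ → α) (π : Equiv.Perm (Fin δ)) :
    ofFn (g ∘ π) = ofFn g := by
  rw [ofFn_eq_map_univ, ofFn_eq_map_univ, ← Multiset.map_map,
    Multiset.map_univ_val_equiv]

lemma rel_trans {r : α → α → Prop} (ht : Transitive r) :
    ∀ {A B C : Multiset α}, Multiset.Rel r A B → Multiset.Rel r B C → Multiset.Rel r A C := by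
  intro A B C h1
  induction h1 generalizing C with
  | zero => intro h2; simpa using h2
  | @cons a b as bs hab h ih =>
    intro h2
    obtain ⟨c, cs, hbc, hcs, rfl⟩ := Multiset.rel_cons_left.mp h2
    exact Multiset.Rel.cons (ht hab hbc) (ih hcs)

end Aux

section Anti
variable {τ : Type*}

lemma rel_subset_sum_card_le {A B : Multiset (Finset τ)}
    (h : Multiset.Rel (· ⊆ ·) A B) :
    (A.map Finset.card).sum ≤ (B.map Finset.card).sum := by
  induction h with
  | zero => simp
  | cons hab h ih =>
    simp only [Multiset.map_cons, Multiset.sum_cons]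
    exact add_le_add (Finset.card_le_card hab) ih

lemma rel_subset_eq_of_sum_eq {A B : Multiset (Finset τ)}
    (h : Multiset.Rel (· ⊆ ·) A B)
    (hs : (B.map Finset.card).sum ≤ (A.map Finset.card).sum) : A = B := by
  induction h with
  | zero => rfl
  | @cons a b as bs hab h ih =>
    simp only [Multiset.map_cons, Multiset.sum_cons] at hs
    have h1 : Finset.card a ≤ Finset.card b := Finset.card_le_card hab
    have h2 := rel_subset_sum_card_le h
    have hab' : a = b := Finset.eq_of_subset_of_card_le hab (by omega)
    rw [hab', ih (by omega)]

lemma rel_subset_antisymm {A B : Multiset (Finset τ)}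
    (h1 : Multiset.Rel (· ⊆ ·) A B) (h2 : Multiset.Rel (· ⊆ ·) B A) : A = B :=
  rel_subset_eq_of_sum_eq h1 (rel_subset_sum_card_le h2)

end Anti

-- === properties of K ===
variable {δ : ℕ} {Γ : Set (Multiset (Finset σ))} {E : Set (Multiset σ)}

lemma KClosure.card (hΓcard : ∀ C ∈ Γ, Multiset.card C = δ) {C} (h : KClosure δ Γ C) :
    Multiset.card C = δ := by
  induction h with
  | base h => exact hΓcard _ h
  | comb hA hB hcomb hne ihA ihB =>
    obtain ⟨a, b, φ, u, _, _, hc⟩ := hcomb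
    rw [← hc]; exact ofFn_card _

lemma KClosure.nonempty (hΓne : ∀ C ∈ Γ, ∀ s ∈ C, s.Nonempty) {C} (h : KClosure δ Γ C) :
    ∀ s ∈ C, s.Nonempty := by
  induction h with
  | base h => exact hΓne _ h
  | comb _ _ _ hne _ _ => exact hne

lemma KClosure.satUQ (hΓUQ : ∀ C ∈ Γ, SatUQ E C) {C} (h : KClosure δ Γ C) :
    SatUQ E C := by
  induction h with
  | base h => exact hΓUQ _ h
  | @comb A B C hA hB hcomb hne ihA ihB =>
    obtain ⟨a, b, φ, u, ha, hb, hc⟩ := hcomb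
    intro M hM
    rw [← hc] at hM
    obtain ⟨m, hm, hpt⟩ := rel_ofFn_right hM
    by_cases hu : m u ∈ a u
    · apply ihA
      rw [← ha, ← hm]
      apply rel_ofFn_of_pointwise
      intro i
      by_cases hi : i = u
      · subst hi; exact hu
      · have := hpt i
        simp only [combineFn, if_neg hi, Finset.mem_inter] at this
        exact this.1
    · apply ihB
      rw [← hb, ← ofFn_comp_perm b φ, ← hm]
      apply rel_ofFn_of_pointwise
      intro i
      by_cases hi : i = u
      · subst hi
        have h2 : m i ∈ a i ∪ b (φ i) := by simpa [combineFn] using hpt i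
        exact (Finset.mem_union.mp h2).resolve_left hu
      · have := hpt i
        simp only [combineFn, if_neg hi, Finset.mem_inter] at this
        exact this.2

-- monotonicity of SatUQ under pointwise subsets
lemma satUQ_mono {d d' : Fin δ → Finset σ} (hsub : ∀ i, d' i ⊆ d i)
    (h : SatUQ E (ofFn d)) : SatUQ E (ofFn d') := by
  intro M hM
  obtain ⟨m, hm, hpt⟩ := rel_ofFn_right hM
  apply h
  rw [← hm]
  exact rel_ofFn_of_pointwise fun i => hsub i (hpt i)

-- singletons case
lemma exists_dom_singletons
    (hE : ∀ M ∈ E, ∃ C ∈ Γ, Multiset.Rel (· ∈ ·) M C)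
    (d : Fin δ → Finset σ) (h1 : ∀ i, (d i).card = 1)
    (hUQ : SatUQ E (ofFn d)) :
    ∃ C, KClosure δ Γ C ∧ Multiset.Rel (· ⊆ ·) (ofFn d) C := by
  choose m hm using fun i => Finset.card_eq_one.mp (h1 i)
  have hmem : Multiset.Rel (· ∈ ·) (ofFn m) (ofFn d) :=
    rel_ofFn_of_pointwise fun i => by rw [hm i]; exact Finset.mem_singleton_self _
  obtain ⟨A, hA, hrel⟩ := hE _ (hUQ _ hmem)
  obtain ⟨a, ha, hpt⟩ := rel_ofFn_left hrel
  refine ⟨A, KClosure.base hA, ?_⟩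
  rw [← ha]
  exact rel_ofFn_of_pointwise fun i => by
    rw [hm i]; exact Finset.singleton_subset_iff.mpr (hpt i)

lemma exists_dom
    (hE : ∀ M ∈ E, ∃ C ∈ Γ, Multiset.Rel (· ∈ ·) M C) :
    ∀ (n : ℕ) (d : Fin δ → Finset σ), (∑ i, (d i).card) ≤ n → (∀ i, (d i).Nonempty) →
      SatUQ E (ofFn d) → ∃ C, KClosure δ Γ C ∧ Multiset.Rel (· ⊆ ·) (ofFn d) C := by
  intro n
  induction n with
  | zero =>
    intro d hsum hne hUQ
    refine exists_dom_singletons hE d (fun i => ?_) hUQ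
    have h1 : 0 < (d i).card := Finset.card_pos.mpr (hne i)
    have h2 : (d i).card ≤ ∑ j, (d j).card :=
      Finset.single_le_sum (f := fun j => (d j).card) (fun _ _ => Nat.zero_le _)
        (Finset.mem_univ i)
    omega
  | succ n ih =>
    intro d hsum hne hUQ
    by_cases hsing : ∀ i, (d i).card = 1
    · exact exists_dom_singletons hE d hsing hUQ
    · push_neg at hsing
      obtain ⟨u, hu⟩ := hsing
      have hu2 : 2 ≤ (d u).card := by
        have := Finset.card_pos.mpr (hne u); omega
      obtain ⟨x, hx⟩ := hne u
      have hsumupd : ∀ s : Finset σ,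
          ∑ i, ((Function.update d u s) i).card
            = s.card + ∑ i ∈ Finset.univ.erase u, (d i).card := by
        intro s
        have : ∀ i, ((Function.update d u s) i).card
            = Function.update (fun j => (d j).card) u s.card i := by
          intro i
          exact Function.apply_update (fun _ t => Finset.card t) d u s i
        simp only [this]
        rw [Finset.sum_update_of_mem (Finset.mem_univ u),
          Finset.sdiff_singleton_eq_erase]
      have hsplit : ∑ i, (d i).card
          = (d u).card + ∑ i ∈ Finset.univ.erase u, (d i).card :=
        (Finset.add_sum_erase _ _ (Finset.mem_univ u)).symm
      have hcerase : ((d u).erase x).card = (d u).card - 1 :=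
        Finset.card_erase_of_mem hx
      -- first sub-configuration
      set d1 := Function.update d u ((d u).erase x) with hd1
      set d2 := Function.update d u ({x} : Finset σ) with hd2
      have hsub1 : ∀ i, d1 i ⊆ d i := by
        intro i
        by_cases hi : i = u
        · subst hi; rw [hd1, Function.update_self]; exact Finset.erase_subset _ _
        · rw [hd1, Function.update_of_ne hi]
      have hsub2 : ∀ i, d2 i ⊆ d i := by
        intro i
        by_cases hi : i = u
        · subst hi; rw [hd2, Function.update_self]
          exact Finset.singleton_subset_iff.mpr hx
        · rw [hd2, Function.update_of_ne hi]
      have hne1 : ∀ i, (d1 i).Nonempty := by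
        intro i
        by_cases hi : i = u
        · subst hi; rw [hd1, Function.update_self]
          apply Finset.card_pos.mp; omega
        · rw [hd1, Function.update_of_ne hi]; exact hne i
      have hne2 : ∀ i, (d2 i).Nonempty := by
        intro i
        by_cases hi : i = u
        · subst hi; rw [hd2, Function.update_self]; exact Finset.singleton_nonempty x
        · rw [hd2, Function.update_of_ne hi]; exact hne i
      have hsum1 : ∑ i, (d1 i).card ≤ n := by
        rw [hd1, hsumupd]; omega
      have hsum2 : ∑ i, (d2 i).card ≤ n := by
        rw [hd2, hsumupd, Finset.card_singleton]; omega
      obtain ⟨C₁, hK₁, hrel₁⟩ := ih d1 hsum1 hne1 (satUQ_mono hsub1 hUQ)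
      obtain ⟨C₂, hK₂, hrel₂⟩ := ih d2 hsum2 hne2 (satUQ_mono hsub2 hUQ)
      obtain ⟨c₁, hc₁, hpt₁⟩ := rel_ofFn_left hrel₁
      obtain ⟨c₂, hc₂, hpt₂⟩ := rel_ofFn_left hrel₂
      set cf := combineFn c₁ c₂ (Equiv.refl _) u with hcf
      have hdomin : ∀ i, d i ⊆ cf i := by
        intro i
        by_cases hi : i = u
        · subst hi
          have hgoal : d i ⊆ c₁ i ∪ c₂ i := by
            intro y hy
            by_cases hyx : y = x
            · exact Finset.mem_union_right _ (hpt₂ i (by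
                rw [hd2, Function.update_self]; exact Finset.mem_singleton.mpr hyx))
            · exact Finset.mem_union_left _ (hpt₁ i (by
                rw [hd1, Function.update_self]; exact Finset.mem_erase.mpr ⟨hyx, hy⟩))
          rw [hcf]
          simpa [combineFn] using hgoal
        · rw [hcf]
          simp only [combineFn, if_neg hi, Equiv.refl_apply]
          refine Finset.subset_inter ?_ ?_
          · have := hpt₁ i; rw [hd1, Function.update_of_ne hi] at this; exact this
          · have := hpt₂ i; rw [hd2, Function.update_of_ne hi] at this; exact this
      have hne' : ∀ s ∈ ofFn cf, s.Nonempty := by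
        intro s hs
        obtain ⟨i, rfl⟩ := (mem_ofFn' cf s).mp hs
        exact (hne i).mono (hdomin i)
      exact ⟨ofFn cf, KClosure.comb hK₁ hK₂ ⟨c₁, c₂, Equiv.refl _, u, hc₁, hc₂, rfl⟩ hne',
        rel_ofFn_of_pointwise hdomin⟩


/-- Correctness of the new round elimination procedure: the procedure produces exactly the
maximal configurations satisfying the universal quantifier. -/
theorem newRE_correct {σ : Type*} [Fintype σ] [DecidableEq σ] (δ : ℕ) (hδ : 0 < δ)
    (Γ : Set (Multiset (Finset σ)))
    (hΓcard : ∀ C ∈ Γ, Multiset.card C = δ)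
    (hΓne : ∀ C ∈ Γ, ∀ s ∈ C, s.Nonempty)
    (E : Set (Multiset σ))
    (hE : ∀ M : Multiset σ, M ∈ E ↔ ∃ C ∈ Γ, Multiset.Rel (· ∈ ·) M C) :
    {C | KClosure δ Γ C ∧ ¬ ∃ C', KClosure δ Γ C' ∧ StrictlyDominatedBy C C'} =
      {C : Multiset (Finset σ) | Multiset.card C = δ ∧ (∀ s ∈ C, s.Nonempty) ∧ SatUQ E C ∧
        ¬ ∃ C', Multiset.card C' = δ ∧ (∀ s ∈ C', s.Nonempty) ∧ SatUQ E C' ∧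
          StrictlyDominatedBy C C'} := by
  have hΓUQ : ∀ C ∈ Γ, SatUQ E C := fun C hC M hM => (hE M).mpr ⟨C, hC, hM⟩
  have hE' : ∀ M ∈ E, ∃ C ∈ Γ, Multiset.Rel (· ∈ ·) M C := fun M hM => (hE M).mp hM
  have hdomtrans : ∀ {A B C : Multiset (Finset σ)}, DominatedBy A B → DominatedBy B C →
      DominatedBy A C :=
    fun hAB hBC => rel_trans (α := Finset σ) (r := (· ⊆ ·)) (by intro _ _ _ h1 h2; exact subset_trans h1 h2) hAB hBC
  have hdom : ∀ D : Multiset (Finset σ), Multiset.card D = δ → (∀ s ∈ D, s.Nonempty) →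
      SatUQ E D → ∃ C, KClosure δ Γ C ∧ DominatedBy D C := by
    intro D hcard hne hUQ
    obtain ⟨d, rfl⟩ := exists_ofFn_eq hcard
    exact exists_dom hE' (∑ i, (d i).card) d le_rfl
      (fun i => hne _ ((mem_ofFn' d _).mpr ⟨i, rfl⟩)) hUQ
  ext D
  simp only [Set.mem_setOf_eq]
  constructor
  · rintro ⟨hK, hmax⟩
    refine ⟨hK.card hΓcard, hK.nonempty hΓne, hK.satUQ hΓUQ, ?_⟩
    rintro ⟨C', hc', hn', hu', hsd⟩
    obtain ⟨C'', hK'', hdom''⟩ := hdom C' hc' hn' hu'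
    exact hmax ⟨C'', hK'', hdomtrans hsd.1 hdom'',
      fun hback => hsd.2 (hdomtrans hdom'' hback)⟩
  · rintro ⟨hcard, hne, hUQ, hmax⟩
    obtain ⟨C, hKC, hdomC⟩ := hdom D hcard hne hUQ
    have hback : DominatedBy C D := by
      by_contra h
      exact hmax ⟨C, hKC.card hΓcard, hKC.nonempty hΓne, hKC.satUQ hΓUQ, hdomC, h⟩
    have hDC : D = C := rel_subset_antisymm hdomC hback
    refine ⟨hDC ▸ hKC, ?_⟩
    rintro ⟨C', hK', hsd⟩
    exact hmax ⟨C', hK'.card hΓcard, hK'.nonempty hΓne, hK'.satUQ hΓUQ, hsd⟩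


end RoundElim
end

section
/- Let Γ₀ be a finite set of configurations, and define recursively Ψ₀ = Γ₀ and Ψᵢ₊₁ = the set of members of Ψᵢ ∪ {combinations, having no empty set among their sets, of pairs of members of Ψᵢ} that are not strictly dominated by any member of that union. Then there exists an index i with Ψᵢ₊₁ = Ψᵢ. (The procedure NewRE terminates in finitely many steps.) -/
namespace RoundElim

variable {σ : Type*} [DecidableEq σ]

/-- One step of the procedure `NewRE`: add all combinations (having no empty set among their
sets) of pairs of members, then keep only the members not strictly dominated by any member. -/
def psiStep (δ : ℕ) (Ψ : Set (Multiset (Finset σ))) : Set (Multiset (Finset σ)) :=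
  {C ∈ Ψ ∪ {C | (∃ A ∈ Ψ, ∃ B ∈ Ψ, IsCombination δ C A B) ∧ ∀ s ∈ C, s.Nonempty} |
    ¬ ∃ C' ∈ Ψ ∪ {C | (∃ A ∈ Ψ, ∃ B ∈ Ψ, IsCombination δ C A B) ∧ ∀ s ∈ C, s.Nonempty},
      StrictlyDominatedBy C C'}

/-- The sequence `Ψ₀, Ψ₁, Ψ₂, …` computed by the procedure `NewRE`. -/
def psiSeq (δ : ℕ) (Γ₀ : Set (Multiset (Finset σ))) : ℕ → Set (Multiset (Finset σ))
  | 0 => Γ₀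
  | (i + 1) => psiStep δ (psiSeq δ Γ₀ i)

/-!
There are only finitely many configurations of cardinality `δ` over the finite type `Finset σ`.
The configurations dominated by some member of `Ψᵢ` form a non-decreasing sequence of sets: every
member of `Ψᵢ` is a candidate of step `i`, hence dominated by a maximal candidate, which lies in
`Ψᵢ₊₁`. So this sequence stabilizes. From then on every candidate is dominated by a member of `Ψᵢ`,
and since each `Ψᵢ` with `i ≥ 1` is an antichain for strict domination, no candidate strictly
dominates a member of `Ψᵢ`; thus `Ψᵢ ⊆ Ψᵢ₊₁`, and this non-decreasing sequence of finite sets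
stabilizes as well.
-/

theorem _root_.Set.Finite.exists_forall_ge_eq_of_monotone {α : Type*} {S : Set α}
    (hS : S.Finite) {f : ℕ → Set α} (hf : Monotone f) (hfS : ∀ n, f n ⊆ S) :
    ∃ N, ∀ n ≥ N, f n = f N := by
  have : Finite {T // T ⊆ S} := hS.finite_subsets.to_subtype
  obtain ⟨N, hN⟩ :=
    WellFoundedGT.monotone_chain_condition (α := {T // T ⊆ S}) ⟨fun n => ⟨f n, hfS n⟩, hf⟩
  exact ⟨N, fun n hn => congrArg Subtype.val (hN n hn).symm⟩

theorem finite_setOf_card_eq (α : Type*) [Finite α] (n : ℕ) :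
    {C : Multiset α | Multiset.card C = n}.Finite :=
  (Set.finite_range ((↑) : Sym α n → Multiset α)).subset fun C hC => ⟨⟨C, hC⟩, rfl⟩

theorem card_ofFn {α : Type*} {δ : ℕ} (f : Fin δ → α) : Multiset.card (ofFn f) = δ := by
  simp [ofFn]

section Domination

variable {σ : Type*}

theorem dominatedBy_refl (A : Multiset (Finset σ)) : DominatedBy A A :=
  Multiset.rel_refl_of_refl_on fun _ _ => subset_rfl

theorem DominatedBy.trans {A B C : Multiset (Finset σ)} (hAB : DominatedBy A B)
    (hBC : DominatedBy B C) : DominatedBy A C :=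
  Multiset.Rel.trans _ hAB hBC

theorem DominatedBy.card_eq {A B : Multiset (Finset σ)} (h : DominatedBy A B) :
    Multiset.card A = Multiset.card B :=
  Multiset.card_eq_card_of_rel h

theorem StrictlyDominatedBy.ne {A B : Multiset (Finset σ)} (h : StrictlyDominatedBy A B) :
    A ≠ B := by
  rintro rfl
  exact h.2 (dominatedBy_refl A)

theorem StrictlyDominatedBy.trans_dominatedBy {A B C : Multiset (Finset σ)}
    (hAB : StrictlyDominatedBy A B) (hBC : DominatedBy B C) : StrictlyDominatedBy A C :=
  ⟨hAB.1.trans hBC, fun hCA => hAB.2 (hBC.trans hCA)⟩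

theorem exists_dominatedBy_forall_not_strictlyDominatedBy {T : Set (Multiset (Finset σ))}
    (hT : T.Finite) {C : Multiset (Finset σ)} (hC : C ∈ T) :
    ∃ M ∈ T, DominatedBy C M ∧ ∀ C' ∈ T, ¬ StrictlyDominatedBy M C' := by
  let _ : Preorder (Multiset (Finset σ)) :=
    { le := DominatedBy
      lt := StrictlyDominatedBy
      le_refl := dominatedBy_refl
      le_trans := fun _ _ _ => DominatedBy.trans
      lt_iff_le_not_ge := fun _ _ => Iff.rfl }
  obtain ⟨M, hCM, hM⟩ := hT.exists_le_maximal hC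
  exact ⟨M, hM.prop, hCM, fun C' hC' hMC' => hMC'.2 (hM.2 hC' hMC'.1)⟩

def domClosure (Ψ : Set (Multiset (Finset σ))) : Set (Multiset (Finset σ)) :=
  {C | ∃ M ∈ Ψ, DominatedBy C M}

theorem domClosure_subset_setOf_card_eq {Ψ : Set (Multiset (Finset σ))} {δ : ℕ}
    (hΨ : ∀ C ∈ Ψ, Multiset.card C = δ) :
    domClosure Ψ ⊆ {C | Multiset.card C = δ} := by
  rintro C ⟨M, hM, hCM⟩
  exact hCM.card_eq.trans (hΨ M hM)

end Domination

section Step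

variable {δ : ℕ} {Ψ : Set (Multiset (Finset σ))}

def candidates (δ : ℕ) (Ψ : Set (Multiset (Finset σ))) : Set (Multiset (Finset σ)) :=
  Ψ ∪ {C | (∃ A ∈ Ψ, ∃ B ∈ Ψ, IsCombination δ C A B) ∧ ∀ s ∈ C, s.Nonempty}

theorem subset_candidates : Ψ ⊆ candidates δ Ψ :=
  Set.subset_union_left

theorem psiStep_subset_candidates : psiStep δ Ψ ⊆ candidates δ Ψ :=
  fun _ hC => hC.1

theorem isAntichain_psiStep : IsAntichain StrictlyDominatedBy (psiStep δ Ψ) :=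
  fun _ hC C' hC' _ h => hC.2 ⟨C', psiStep_subset_candidates hC', h⟩

theorem candidates_subset_setOf_card_eq (hΨ : ∀ C ∈ Ψ, Multiset.card C = δ) :
    candidates δ Ψ ⊆ {C | Multiset.card C = δ} := by
  rintro C (hC | ⟨⟨A, -, B, -, a, b, φ, u, -, -, rfl⟩, -⟩)
  · exact hΨ C hC
  · exact card_ofFn _

theorem candidates_subset_domClosure_psiStep (hfin : (candidates δ Ψ).Finite) :
    candidates δ Ψ ⊆ domClosure (psiStep δ Ψ) := by
  intro C hC
  obtain ⟨M, hM, hCM, hmax⟩ := exists_dominatedBy_forall_not_strictlyDominatedBy hfin hC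
  exact ⟨M, ⟨hM, fun ⟨C', hC', h⟩ => hmax C' hC' h⟩, hCM⟩

theorem domClosure_subset_domClosure_psiStep (hfin : (candidates δ Ψ).Finite) :
    domClosure Ψ ⊆ domClosure (psiStep δ Ψ) := by
  rintro C ⟨M, hM, hCM⟩
  obtain ⟨M', hM', hMM'⟩ := candidates_subset_domClosure_psiStep hfin (subset_candidates hM)
  exact ⟨M', hM', hCM.trans hMM'⟩

theorem subset_psiStep_of_candidates_subset_domClosure
    (hΨ : IsAntichain StrictlyDominatedBy Ψ) (hcand : candidates δ Ψ ⊆ domClosure Ψ) :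
    Ψ ⊆ psiStep δ Ψ := by
  refine fun C hC => ⟨subset_candidates hC, ?_⟩
  rintro ⟨C', hC', hCC'⟩
  obtain ⟨M, hM, hC'M⟩ := hcand hC'
  have hCM := hCC'.trans_dominatedBy hC'M
  exact hΨ hC hM hCM.ne hCM

end Step

section Sequence

variable {δ : ℕ} {Γ₀ : Set (Multiset (Finset σ))}

theorem card_eq_of_mem_psiSeq (hΓcard : ∀ C ∈ Γ₀, Multiset.card C = δ) :
    ∀ i, ∀ C ∈ psiSeq δ Γ₀ i, Multiset.card C = δ
  | 0 => hΓcard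
  | i + 1 => fun _ hC => candidates_subset_setOf_card_eq (card_eq_of_mem_psiSeq hΓcard i)
      (psiStep_subset_candidates hC)

variable [Fintype σ]

theorem finite_candidates_psiSeq (hΓcard : ∀ C ∈ Γ₀, Multiset.card C = δ) (i : ℕ) :
    (candidates δ (psiSeq δ Γ₀ i)).Finite :=
  (finite_setOf_card_eq _ δ).subset
    (candidates_subset_setOf_card_eq (card_eq_of_mem_psiSeq hΓcard i))

theorem monotone_domClosure_psiSeq (hΓcard : ∀ C ∈ Γ₀, Multiset.card C = δ) :
    Monotone fun i => domClosure (psiSeq δ Γ₀ i) :=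
  monotone_nat_of_le_succ fun i =>
    domClosure_subset_domClosure_psiStep (finite_candidates_psiSeq hΓcard i)

theorem psiSeq_subset_psiSeq_succ_of_domClosure_eq (hΓcard : ∀ C ∈ Γ₀, Multiset.card C = δ)
    {i : ℕ} (hD : domClosure (psiSeq δ Γ₀ (i + 2)) = domClosure (psiSeq δ Γ₀ (i + 1))) :
    psiSeq δ Γ₀ (i + 1) ⊆ psiSeq δ Γ₀ (i + 2) :=
  subset_psiStep_of_candidates_subset_domClosure isAntichain_psiStep
    (hD ▸ candidates_subset_domClosure_psiStep (finite_candidates_psiSeq hΓcard (i + 1)))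

end Sequence

theorem newRE_terminates_general {σ : Type*} [Fintype σ] [DecidableEq σ] (δ : ℕ)
    (Γ₀ : Set (Multiset (Finset σ)))
    (hΓcard : ∀ C ∈ Γ₀, Multiset.card C = δ) :
    ∃ i : ℕ, psiSeq δ Γ₀ (i + 1) = psiSeq δ Γ₀ i := by
  have hS := finite_setOf_card_eq (Finset σ) δ
  obtain ⟨N, hN⟩ := hS.exists_forall_ge_eq_of_monotone (monotone_domClosure_psiSeq hΓcard)
    fun i => domClosure_subset_setOf_card_eq (card_eq_of_mem_psiSeq hΓcard i)
  have hmono : Monotone fun k => psiSeq δ Γ₀ (N + k + 1) :=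
    monotone_nat_of_le_succ fun k => psiSeq_subset_psiSeq_succ_of_domClosure_eq hΓcard
      ((hN _ (by omega)).trans (hN _ (by omega)).symm)
  obtain ⟨M, hM⟩ := hS.exists_forall_ge_eq_of_monotone hmono
    fun k => card_eq_of_mem_psiSeq hΓcard _
  exact ⟨N + M + 1, hM (M + 1) (by omega)⟩

/-- The procedure `NewRE` terminates in finitely many steps. -/
theorem newRE_terminates {σ : Type*} [Fintype σ] [DecidableEq σ] (δ : ℕ) (hδ : 0 < δ)
    (Γ₀ : Set (Multiset (Finset σ))) (hfin : Γ₀.Finite)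
    (hΓcard : ∀ C ∈ Γ₀, Multiset.card C = δ) :
    ∃ i : ℕ, psiSeq δ Γ₀ (i + 1) = psiSeq δ Γ₀ i :=
  newRE_terminates_general δ Γ₀ hΓcard

end RoundElim
end

section
/- Let (L, ≤) be a finite partially ordered type, Σ a subset of L, and Δ a positive integer. Let N be a set of multisets of cardinality Δ over Σ (the node constraint) and E a set of multisets of cardinality 2 over Σ (the edge constraint). Let N' be a set of multisets of cardinality Δ over L such that every member of N is dominated by some member of N' (i.e., related to it by Multiset.Rel (· ≤ ·)), and let E' be a set of multisets of cardinality 2 over L that contains E and is upward closed (if {x, y} ∈ E', x ≤ x', and y ≤ y', then {x', y'} ∈ E'). Then for every finite simple graph G in which every vertex has degree Δ, and every half-edge labeling f with values in Σ such that every node configuration under f belongs to N and every edge configuration under f belongs to E, there exists a half-edge labeling f' with values in L such that f v u ≤ f' v u for all adjacent pairs (v, u), every node configuration under f' belongs to N', and every edge configuration under f' belongs to E'. (Given a solution for Π, the relaxed problem Π' produced by the FixedPoint procedure — whose node constraint dominates N and whose edge constraint is the upward-closed set ⟨E⟩ containing E — can be solved in 0 rounds.) -/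
/-!
A domination `Multiset.Rel (· ≤ ·) C T` of a node configuration `C` matches each half-edge at the
node with a label of `T` above its current label; since the half-edges at a node are distinct,
this matching is a relabeling of that node whose configuration is exactly `T`. Doing this at
every node independently raises every half-edge label, so each edge configuration, which lay in
`E ⊆ E'`, stays in the upward closed `E'`.
-/

namespace RoundElim

/-- The node configuration of vertex `v` under the half-edge labeling `f`:
the multiset of labels `f v u` over the neighbors `u` of `v`. -/
def nodeConfig {V Λ : Type*} (G : SimpleGraph V) [Fintype V] [DecidableRel G.Adj]
    (f : V → V → Λ) (v : V) : Multiset Λ :=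
  (G.neighborFinset v).val.map (f v)

end RoundElim

namespace Multiset

theorem exists_map_eq_of_rel_map_of_nodup {α β : Type*} {r : β → β → Prop} {f : α → β}
    {s : Multiset α} (hs : s.Nodup) {t : Multiset β} (h : Rel r (s.map f) t) :
    ∃ g : α → β, s.map g = t ∧ ∀ a ∈ s, r (f a) (g a) := by
  classical
  induction s using Multiset.induction_on generalizing t with
  | empty => exact ⟨f, by simpa [eq_comm] using h, by simp⟩
  | cons a s ih =>
    obtain ⟨has, hs⟩ := nodup_cons.mp hs
    rw [map_cons, rel_cons_left] at h
    obtain ⟨b, t, hab, hst, rfl⟩ := h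
    obtain ⟨g, rfl, hg⟩ := ih hs hst
    have hupdate : ∀ x ∈ s, Function.update g a b x = g x := fun x hx =>
      Function.update_of_ne (ne_of_mem_of_not_mem hx has) _ _
    refine ⟨Function.update g a b, ?_, ?_⟩
    · rw [map_cons, Function.update_self, map_congr rfl hupdate]
    · intro x hx
      rcases mem_cons.mp hx with rfl | hx
      · simpa using hab
      · simpa [hupdate x hx] using hg x hx

end Multiset

namespace RoundElim

theorem exists_relabel_nodeConfig_eq {V Λ : Type*} [Fintype V] (G : SimpleGraph V)
    [DecidableRel G.Adj] {r : Λ → Λ → Prop} (f : V → V → Λ) (v : V) {T : Multiset Λ}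
    (h : Multiset.Rel r (nodeConfig G f v) T) :
    ∃ g : V → Λ, (G.neighborFinset v).val.map g = T ∧ ∀ u, G.Adj v u → r (f v u) (g u) := by
  obtain ⟨g, hg, hr⟩ := Multiset.exists_map_eq_of_rel_map_of_nodup (G.neighborFinset v).nodup h
  exact ⟨g, hg, fun u hu => hr u ((G.mem_neighborFinset v u).mpr hu)⟩

theorem fixedPoint_relaxation_zero_round_general
    {L : Type*} [PartialOrder L]
    (N : Set (Multiset L))
    (E : Set (Multiset L))
    (N' : Set (Multiset L))
    (hNdom : ∀ M ∈ N, ∃ M' ∈ N', Multiset.Rel (· ≤ ·) M M')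
    (E' : Set (Multiset L))
    (hEE' : E ⊆ E')
    (hup : ∀ x y x' y' : L, ({x, y} : Multiset L) ∈ E' → x ≤ x' → y ≤ y' →
      ({x', y'} : Multiset L) ∈ E')
    {V : Type*} [Fintype V] (G : SimpleGraph V) [DecidableRel G.Adj]
    (f : V → V → L)
    (hfN : ∀ v : V, nodeConfig G f v ∈ N)
    (hfE : ∀ u v : V, G.Adj u v → ({f u v, f v u} : Multiset L) ∈ E) :
    ∃ f' : V → V → L,
      (∀ v u : V, G.Adj v u → f v u ≤ f' v u) ∧
      (∀ v : V, nodeConfig G f' v ∈ N') ∧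
      (∀ u v : V, G.Adj u v → ({f' u v, f' v u} : Multiset L) ∈ E') := by
  choose T hTN' hdom using fun v => hNdom _ (hfN v)
  choose f' hf'T hle using fun v => exists_relabel_nodeConfig_eq G f v (hdom v)
  refine ⟨f', hle, fun v => ?_, fun u v huv => ?_⟩
  · rw [nodeConfig, hf'T v]
    exact hTN' v
  · exact hup _ _ _ _ (hEE' (hfE u v huv)) (hle u v huv) (hle v u huv.symm)

/-- Given a solution for `Π` (node constraint `N`, edge constraint `E`, labels in `Sg ⊆ L`),
the relaxed problem `Π'` — whose node constraint `N'` dominates `N` and whose edge constraint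
`E'` is upward closed and contains `E` — can be solved in 0 rounds: each half-edge label can be
replaced by a larger label so that node configurations land in `N'` and edge configurations
land in `E'`. -/
theorem fixedPoint_relaxation_zero_round
    {L : Type*} [PartialOrder L] [Fintype L]
    (Sg : Set L) (Δ : ℕ) (hΔ : 0 < Δ)
    (N : Set (Multiset L)) (hN : ∀ M ∈ N, Multiset.card M = Δ ∧ ∀ x ∈ M, x ∈ Sg)
    (E : Set (Multiset L)) (hE : ∀ M ∈ E, Multiset.card M = 2 ∧ ∀ x ∈ M, x ∈ Sg)
    (N' : Set (Multiset L)) (hN' : ∀ M ∈ N', Multiset.card M = Δ)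
    (hNdom : ∀ M ∈ N, ∃ M' ∈ N', Multiset.Rel (· ≤ ·) M M')
    (E' : Set (Multiset L)) (hE'card : ∀ M ∈ E', Multiset.card M = 2)
    (hEE' : E ⊆ E')
    (hup : ∀ x y x' y' : L, ({x, y} : Multiset L) ∈ E' → x ≤ x' → y ≤ y' →
      ({x', y'} : Multiset L) ∈ E')
    {V : Type*} [Fintype V] (G : SimpleGraph V) [DecidableRel G.Adj]
    (hreg : ∀ v : V, G.degree v = Δ)
    (f : V → V → L)
    (hfS : ∀ v u : V, G.Adj v u → f v u ∈ Sg)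
    (hfN : ∀ v : V, nodeConfig G f v ∈ N)
    (hfE : ∀ u v : V, G.Adj u v → ({f u v, f v u} : Multiset L) ∈ E) :
    ∃ f' : V → V → L,
      (∀ v u : V, G.Adj v u → f v u ≤ f' v u) ∧
      (∀ v : V, nodeConfig G f' v ∈ N') ∧
      (∀ u v : V, G.Adj u v → ({f' u v, f' v u} : Multiset L) ∈ E') :=
  fixedPoint_relaxation_zero_round_general N E N' hNdom E' hEE' hup G f hfN hfE

end RoundElim
end

section
/- Let Δ ≥ 2, let G be a finite simple graph in which every vertex has degree Δ, and let c be a 2-coloring of the vertices of G into red and blue such that every vertex has at least two neighbors of the opposite color (i.e., c is a (Δ−2)-defective 2-coloring). Then there exists a half-edge labeling f of G with labels in Σ = {⊥, X, Y, XY, XY⁺, AX, BY, AXY⁺, BXY⁺, ABXY⁺} such that: every red vertex's node configuration is the multiset consisting of 2 copies of AX and Δ−2 copies of X; every blue vertex's node configuration is the multiset consisting of 2 copies of BY and Δ−2 copies of Y; and every edge configuration belongs to the edge constraint E defined in the context. (Given a (Δ−2)-defective 2-coloring, the fixed point relaxation Π_Δ of defective 2-coloring can be solved in 0 rounds.) 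-/
namespace RoundElim

/-- The ten labels of the fixed point relaxation `Π_Δ` of defective `2`-coloring. -/
inductive Label
  | bot | X | Y | XY | XYp | AX | BY | AXYp | BXYp | ABXYp
  deriving DecidableEq

open Label

/-- `(p, q)` lies in one of the five products defining the edge constraint of `Π_Δ`. -/
def EdgeOK (p q : Label) : Prop :=
  (p ∈ [BY, Y, bot] ∧ q ∈ [AX, X, bot]) ∨
  (p ∈ [ABXYp, AXYp, BXYp, AX, BY, XYp, XY, X, Y, bot] ∧ q ∈ [bot]) ∨
  (p ∈ [AXYp, AX, XYp, XY, X, Y, bot] ∧ q ∈ [Y, bot]) ∨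
  (p ∈ [BXYp, BY, XYp, XY, X, Y, bot] ∧ q ∈ [X, bot]) ∨
  (p ∈ [XYp, XY, X, Y, bot] ∧ q ∈ [XY, X, Y, bot])

/-- The edge constraint `E` of `Π_Δ`: unordered pairs `{p, q}` such that `(p, q)` or `(q, p)`
lies in one of the five products. -/
def Econstr : Set (Multiset Label) :=
  {m | ∃ p q : Label, m = {p, q} ∧ (EdgeOK p q ∨ EdgeOK q p)}

/-- Given a `(Δ−2)`-defective `2`-coloring of a `Δ`-regular graph (every vertex has at least
two neighbors of the opposite color), the fixed point relaxation `Π_Δ` of defective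
`2`-coloring can be solved in 0 rounds: red vertices output `AX AX X^(Δ−2)`, blue vertices
output `BY BY Y^(Δ−2)`, and all edge configurations lie in the edge constraint. -/
theorem defective2coloring_zero_round (Δ : ℕ) (hΔ : 2 ≤ Δ)
    {V : Type*} [Fintype V] (G : SimpleGraph V) [DecidableRel G.Adj]
    (hreg : ∀ v : V, G.degree v = Δ)
    (c : V → Bool)
    (hdef : ∀ v : V, 2 ≤ ((G.neighborFinset v).filter (fun u => c u ≠ c v)).card) :
    ∃ f : V → V → Label,
      (∀ v : V, c v = true →
        nodeConfig G f v = Multiset.replicate 2 AX + Multiset.replicate (Δ - 2) X) ∧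
      (∀ v : V, c v = false →
        nodeConfig G f v = Multiset.replicate 2 BY + Multiset.replicate (Δ - 2) Y) ∧
      (∀ u v : V, G.Adj u v → ({f u v, f v u} : Multiset Label) ∈ Econstr) := by
  classical
  -- choose, for each vertex, two neighbors of opposite color
  have hchoice : ∀ v : V, ∃ t : Finset V,
      t ⊆ (G.neighborFinset v).filter (fun u => c u ≠ c v) ∧ t.card = 2 :=
    fun v => Finset.exists_subset_card_eq (hdef v)
  choose S hSsub hScard using hchoice
  set f : V → V → Label := fun v u =>
    if u ∈ S v then (if c v then AX else BY) else (if c v then X else Y) with hf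
  have hSnb : ∀ v, S v ⊆ G.neighborFinset v :=
    fun v => (hSsub v).trans (Finset.filter_subset _ _)
  have hSopp : ∀ v u, u ∈ S v → c u ≠ c v := by
    intro v u hu
    have := hSsub v hu
    simp only [Finset.mem_filter] at this
    exact this.2
  -- node configurations
  have hnode : ∀ v a b, (∀ u ∈ S v, f v u = a) →
      (∀ u ∈ G.neighborFinset v, u ∉ S v → f v u = b) →
      nodeConfig G f v = Multiset.replicate 2 a + Multiset.replicate (Δ - 2) b := by
    intro v a b ha hb
    have hle : (S v).val ≤ (G.neighborFinset v).val :=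
      Finset.val_le_iff.mpr (hSnb v)
    have hsplit : (G.neighborFinset v).val
        = (S v).val + (G.neighborFinset v \ S v).val := by
      rw [Finset.sdiff_val, add_tsub_cancel_of_le hle]
    have hcard : (G.neighborFinset v \ S v).card = Δ - 2 := by
      rw [Finset.card_sdiff_of_subset (hSnb v), hScard]
      have : (G.neighborFinset v).card = Δ := by
        rw [G.card_neighborFinset_eq_degree]; exact hreg v
      rw [this]
    unfold nodeConfig
    rw [hsplit, Multiset.map_add]
    congr 1
    · rw [Multiset.map_congr rfl (fun x hx => ha x hx), Multiset.map_const',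
        ← Finset.card_def, hScard v]
    · have : ∀ x ∈ (G.neighborFinset v \ S v).val, f v x = b := by
        intro x hx
        rw [Finset.mem_val, Finset.mem_sdiff] at hx
        exact hb x hx.1 hx.2
      rw [Multiset.map_congr rfl this, Multiset.map_const', ← Finset.card_def, hcard]
  refine ⟨f, ?_, ?_, ?_⟩
  · intro v hv
    refine hnode v AX X ?_ ?_
    · intro u hu; simp [hf, hv, hu]
    · intro u _ hu'; simp [hf, hv, hu']
  · intro v hv
    refine hnode v BY Y ?_ ?_
    · intro u hu; simp [hf, hv, hu]
    · intro u _ hu'; simp [hf, hv, hu']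
  · intro u v huv
    have o1 : v ∈ S u → c v ≠ c u := hSopp u v
    have o2 : u ∈ S v → c u ≠ c v := hSopp v u
    simp only [hf]
    by_cases h1 : v ∈ S u <;> by_cases h2 : u ∈ S v <;>
      cases hcu : c u <;> cases hcv : c v <;>
      simp only [h1, h2, hcu, hcv, if_true, if_false, ite_true, ite_false,
        Bool.false_eq_true, Bool.true_eq_false, not_false_eq_true] <;>
      first
        | exact ⟨_, _, rfl, by unfold EdgeOK; decide⟩
        | (exfalso;
           first
             | exact (o1 h1) (by simp [hcu, hcv])
             | exact (o2 h2) (by simp [hcu, hcv]))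

end RoundElim
end

section
/- Let (L, ≤) be a finite partially ordered type (arising as the reachability order of a target diagram, so that ℓ can be matched with ℓ' iff ℓ ≤ ℓ'), and let C and T be multisets over L of the same cardinality. Let S_C and S_T denote the finite sets of elements occurring in C and T respectively. Call a subset R of S_T right-closed if for all ℓ ∈ R and ℓ' ∈ S_T with ℓ ≤ ℓ', also ℓ' ∈ R. For a right-closed R ⊆ S_T, let M(R) = {ℓ ∈ S_C : there is no ℓ' ∈ S_T \ R with ℓ ≤ ℓ'}, let X(R) be the sum over ℓ ∈ M(R) of the multiplicity of ℓ in C, and let T(R) be the sum over ℓ ∈ R of the multiplicity of ℓ in T. Then Multiset.Rel (· ≤ ·) C T holds (i.e., there is a perfect matching pairing each element of C with an element of T that it can be matched with) if and only if X(R) ≤ T(R) for every right-closed subset R of S_T. (Matching criterion via right-closed cuts, proved using Hall's marriage theorem, underlying the automatic verification of the defective 3-coloring fixed point.) -/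
/-!
By Hall's marriage theorem, `C` can be matched into `T` as soon as every sub-multiset `u ≤ C` has
at least `card u` elements of `T` above some element of `u`. For an order relation it suffices to
test right-closed sets: the elements of `T` above `u` are exactly those in the upward closure `R`
of `u` inside the support of `T`, and `u` lives on `M(R)`, so the cut inequality for `R` is Hall's
inequality for `u`. Conversely, a matching sends the part of `C` over `M(R)` into `R`.
-/

open Finset

namespace Multiset

variable {α β : Type*}

theorem sum_count_eq_card_filter_mem [DecidableEq α] (M : Multiset α) (s : Finset α) :
    ∑ a ∈ s, M.count a = card (M.filter (· ∈ s)) := by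
  rw [← sum_count_eq_card (s := s) fun a ha => (mem_filter.1 ha).2]
  exact Finset.sum_congr rfl fun a ha => (count_filter_of_pos ha).symm

theorem sum_count_toFinset_filter [DecidableEq α] (M : Multiset α) (p : α → Prop)
    [DecidablePred p] :
    ∑ a ∈ M.toFinset.filter p, M.count a = card (M.filter p) := by
  rw [sum_count_eq_card_filter_mem]
  exact congrArg card (filter_congr fun a ha => by simp [mem_toFinset.2 ha])

theorem Rel.card_filter_le {r : α → β → Prop} {s : Multiset α} {t : Multiset β}
    (h : Rel r s t) {p : α → Prop} {q : β → Prop} [DecidablePred p] [DecidablePred q]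
    (hpq : ∀ a ∈ s, ∀ b ∈ t, r a b → p a → q b) :
    card (s.filter p) ≤ card (t.filter q) := by
  have h' : Rel (fun a b => p a → q b) s t := h.mono hpq
  clear h hpq
  induction h' with
  | zero => simp
  | @cons a b s t hab _ ih =>
    by_cases ha : p a
    · simpa [filter_cons_of_pos _ ha, filter_cons_of_pos _ (hab ha)] using ih
    · rw [filter_cons_of_neg _ ha]
      by_cases hb : q b
      · rw [filter_cons_of_pos _ hb, card_cons]
        omega
      · rwa [filter_cons_of_neg _ hb]

theorem exists_fin_map_univ_eq (M : Multiset α) :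
    ∃ (n : ℕ) (f : Fin n → α), univ.val.map f = M := by
  induction M using Quotient.inductionOn with
  | h l => exact ⟨l.length, l.get, by rw [Fin.univ_val_map, List.ofFn_get]; rfl⟩

theorem rel_of_hall {r : α → β → Prop} {s : Multiset α} {t : Multiset β}
    (hcard : card s = card t)
    (hall : ∀ u ≤ s, ∃ v ≤ t, card u ≤ card v ∧ ∀ b ∈ v, ∃ a ∈ u, r a b) : Rel r s t := by
  classical
  obtain ⟨n, f, rfl⟩ := exists_fin_map_univ_eq s
  obtain ⟨m, g, rfl⟩ := exists_fin_map_univ_eq t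
  obtain rfl : n = m := by simpa using hcard
  obtain ⟨σ, hσ, hr⟩ :=
    (Fintype.all_card_le_filter_rel_iff_exists_injective (fun i j => r (f i) (g j))).1 fun A => by
      obtain ⟨v, hvt, hv, hvr⟩ := hall (A.val.map f) (map_le_map (val_le_iff.2 (subset_univ A)))
      calc #A = card (A.val.map f) := (card_map f A.val).symm
        _ ≤ card v := hv
        _ ≤ card ((univ.val.map g).filter fun b => ∃ i ∈ A, r (f i) b) :=
          card_le_card (le_filter.2 ⟨hvt, fun b hb => by simpa using hvr b hb⟩)
        _ = _ := by
          rw [filter_map, card_map, Finset.card_def]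
          simp only [Finset.filter_val, Function.comp_def]
          convert rfl -- the two filters differ only in their `Decidable` instances
  nth_rw 2 [← map_univ_val_equiv (Equiv.ofBijective σ (Finite.injective_iff_bijective.1 hσ))]
  rw [map_map, rel_map]
  refine rel_refl_of_refl_on fun i _ => ?_
  exact hr i

end Multiset

theorem matching_iff_rightClosed_cuts_general {L : Type*} [PartialOrder L]
    [DecidableEq L] [DecidableRel ((· ≤ ·) : L → L → Prop)]
    (C T : Multiset L) (hcard : Multiset.card C = Multiset.card T) :
    Multiset.Rel (· ≤ ·) C T ↔
      ∀ R : Finset L, R ⊆ T.toFinset →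
        (∀ ℓ ∈ R, ∀ ℓ' ∈ T.toFinset, ℓ ≤ ℓ' → ℓ' ∈ R) →
        (∑ ℓ ∈ C.toFinset.filter (fun ℓ => ¬ ∃ ℓ' ∈ T.toFinset \ R, ℓ ≤ ℓ'),
            C.count ℓ) ≤
          ∑ ℓ ∈ R, T.count ℓ := by
  simp_rw [Multiset.sum_count_toFinset_filter, Multiset.sum_count_eq_card_filter_mem]
  constructor
  · intro h R _ _
    refine h.card_filter_le fun a _ b hb hab ha => ?_
    by_contra hbR
    exact ha ⟨b, mem_sdiff.2 ⟨Multiset.mem_toFinset.2 hb, hbR⟩, hab⟩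
  · intro hcut
    refine Multiset.rel_of_hall hcard fun u hu => ?_
    classical
    set R := T.toFinset.filter fun b => ∃ a ∈ u, a ≤ b
    have hR_closed : ∀ ℓ ∈ R, ∀ ℓ' ∈ T.toFinset, ℓ ≤ ℓ' → ℓ' ∈ R := by
      intro ℓ hℓ ℓ' hℓ' hle
      obtain ⟨a, ha, hal⟩ := (mem_filter.1 hℓ).2
      exact mem_filter.2 ⟨hℓ', a, ha, hal.trans hle⟩
    have hu_M : ∀ a ∈ u, ¬ ∃ ℓ' ∈ T.toFinset \ R, a ≤ ℓ' := by
      rintro a ha ⟨b, hb, hab⟩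
      exact (mem_sdiff.1 hb).2 (mem_filter.2 ⟨(mem_sdiff.1 hb).1, a, ha, hab⟩)
    refine ⟨T.filter (· ∈ R), Multiset.filter_le _ _, ?_,
      fun b hb => (mem_filter.1 (Multiset.mem_filter.1 hb).2).2⟩
    exact (Multiset.card_le_card (Multiset.le_filter.2 ⟨hu, hu_M⟩)).trans
      (hcut R (filter_subset _ _) hR_closed)

/-- Matching criterion via right-closed cuts (via Hall's marriage theorem): for multisets
`C`, `T` of equal cardinality over a finite partially ordered type `L`,
`Multiset.Rel (· ≤ ·) C T` holds (each element of `C` can be matched bijectively with an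
element of `T` above it) if and only if for every right-closed subset `R` of the support of
`T`, the total multiplicity `X(R)` in `C` of the elements that can only be matched into `R`
is at most the total multiplicity `T(R)` in `T` of the elements of `R`. -/
theorem matching_iff_rightClosed_cuts {L : Type*} [PartialOrder L] [Fintype L]
    [DecidableEq L] [DecidableRel ((· ≤ ·) : L → L → Prop)]
    (C T : Multiset L) (hcard : Multiset.card C = Multiset.card T) :
    Multiset.Rel (· ≤ ·) C T ↔
      ∀ R : Finset L, R ⊆ T.toFinset →
        (∀ ℓ ∈ R, ∀ ℓ' ∈ T.toFinset, ℓ ≤ ℓ' → ℓ' ∈ R) →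
        (∑ ℓ ∈ C.toFinset.filter (fun ℓ => ¬ ∃ ℓ' ∈ T.toFinset \ R, ℓ ≤ ℓ'),
            C.count ℓ) ≤
          ∑ ℓ ∈ R, T.count ℓ :=
  matching_iff_rightClosed_cuts_general C T hcard
end
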